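/- Let φ : ℝ^m → ℝ^n be a smooth map with τ = Δφ, where Δ = ∑_k ∂_k², and define the biharmonic stress-energy tensor S₂(i,j) = δ_{ij}((1/2)|τ|² + ∑_k ⟨∂_kφ, ∂_k τ⟩) - ⟨∂_i φ, ∂_j τ⟩ - ⟨∂_j φ, ∂_i τ⟩. Then ∑_j ∂_j S₂(i,j) = -⟨Δτ, ∂_i φ⟩ for every i; in particular S₂ is divergence-free whenever Δ²φ = 0. -/

import Mathlib

open MeasureTheory

/-- The partial derivative in the `i`-th coordinate direction. -/
noncomputable def pd {m : ℕ} {E : Type*} [NormedAddCommGroup E] [NormedSpace ℝ E]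
    (i : Fin m) (f : (Fin m → ℝ) → E) (x : Fin m → ℝ) : E :=
  fderiv ℝ f x (Pi.single i 1)

/-- Euclidean inner product on `Fin n → ℝ`. -/
def dot {n : ℕ} (v w : Fin n → ℝ) : ℝ := ∑ α, v α * w α
/-- The componentwise Euclidean Laplacian `Δ = ∑ᵢ ∂ᵢ²`. -/
noncomputable def lap {m n : ℕ} (f : (Fin m → ℝ) → Fin n → ℝ) :
    (Fin m → ℝ) → Fin n → ℝ :=
  fun x => ∑ i, pd i (pd i f) x

/-- The biharmonic stress-energy tensor `S₂` of a map `φ : ℝ^m → ℝ^n`, with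
`τ = Δφ` (analyst's sign convention `Δ = +∑ ∂²`). -/
noncomputable def S2 {m n : ℕ} (φ : (Fin m → ℝ) → Fin n → ℝ)
    (i j : Fin m) (x : Fin m → ℝ) : ℝ :=
  (if i = j then (1 : ℝ) else 0) *
      ((1 / 2) * dot (lap φ x) (lap φ x)
        + ∑ k, dot (pd k φ x) (pd k (lap φ) x))
    - dot (pd i φ x) (pd j (lap φ) x)
    - dot (pd j φ x) (pd i (lap φ) x)

section helpers
variable {m n : ℕ} {E : Type*} [NormedAddCommGroup E] [NormedSpace ℝ E]

lemma pd_contDiff {f : (Fin m → ℝ) → E} (hf : ContDiff ℝ (⊤ : ℕ∞) f) (i : Fin m) :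
    ContDiff ℝ (⊤ : ℕ∞) (pd i f) :=
  (hf.fderiv_right (by simp)).clm_apply contDiff_const

lemma pd_comm {f : (Fin m → ℝ) → E} (hf : ContDiff ℝ (⊤ : ℕ∞) f) (i j : Fin m) (x : Fin m → ℝ) :
    pd i (pd j f) x = pd j (pd i f) x := by
  have hd : ∀ y, HasFDerivAt f (fderiv ℝ f y) y :=
    fun y => (hf.differentiable (by simp) y).hasFDerivAt
  have hf' : ContDiff ℝ (⊤ : ℕ∞) (fderiv ℝ f) := hf.fderiv_right (by simp)
  have hx : HasFDerivAt (fderiv ℝ f) (fderiv ℝ (fderiv ℝ f) x) x :=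
    (hf'.differentiable (by simp) x).hasFDerivAt
  have key : ∀ (v : Fin m → ℝ) (k : Fin m),
      fderiv ℝ (fun y => fderiv ℝ f y v) x (Pi.single k 1)
        = fderiv ℝ (fderiv ℝ f) x (Pi.single k 1) v := by
    intro v k
    have h := hx.clm_apply (hasFDerivAt_const v x)
    rw [h.fderiv]; simp
  show fderiv ℝ (fun y => fderiv ℝ f y (Pi.single j 1)) x (Pi.single i 1) = _
  rw [key]
  rw [second_derivative_symmetric hd hx (Pi.single i 1) (Pi.single j 1)]
  exact (key _ _).symm

lemma pd_add {f g : (Fin m → ℝ) → E} {x : Fin m → ℝ} (hf : DifferentiableAt ℝ f x)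
    (hg : DifferentiableAt ℝ g x) (i : Fin m) :
    pd i (fun y => f y + g y) x = pd i f x + pd i g x := by
  unfold pd; rw [fderiv_fun_add hf hg]; rfl

lemma pd_sub {f g : (Fin m → ℝ) → E} {x : Fin m → ℝ} (hf : DifferentiableAt ℝ f x)
    (hg : DifferentiableAt ℝ g x) (i : Fin m) :
    pd i (fun y => f y - g y) x = pd i f x - pd i g x := by
  unfold pd; rw [fderiv_fun_sub hf hg]; rfl

lemma pd_const_mul {f : (Fin m → ℝ) → ℝ} {x : Fin m → ℝ} (hf : DifferentiableAt ℝ f x)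
    (c : ℝ) (i : Fin m) :
    pd i (fun y => c * f y) x = c * pd i f x := by
  unfold pd; rw [fderiv_const_mul hf c]; rfl

lemma pd_mul {f g : (Fin m → ℝ) → ℝ} {x : Fin m → ℝ} (hf : DifferentiableAt ℝ f x)
    (hg : DifferentiableAt ℝ g x) (i : Fin m) :
    pd i (fun y => f y * g y) x = pd i f x * g x + f x * pd i g x := by
  unfold pd; rw [fderiv_fun_mul hf hg]; simp; ring

lemma pd_sum {ι : Type*} (s : Finset ι) {f : ι → (Fin m → ℝ) → E} {x : Fin m → ℝ}
    (hf : ∀ k ∈ s, DifferentiableAt ℝ (f k) x) (i : Fin m) :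
    pd i (fun y => ∑ k ∈ s, f k y) x = ∑ k ∈ s, pd i (f k) x := by
  unfold pd; rw [fderiv_fun_sum hf]; simp

lemma pd_apply {f : (Fin m → ℝ) → Fin n → ℝ} {x : Fin m → ℝ}
    (hf : DifferentiableAt ℝ f x) (i : Fin m) (α : Fin n) :
    pd i f x α = pd i (fun y => f y α) x := by
  have h := hasFDerivAt_pi'.1 hf.hasFDerivAt α
  unfold pd; rw [h.fderiv]; rfl

lemma component_diffAt {f : (Fin m → ℝ) → Fin n → ℝ} {x : Fin m → ℝ}
    (hf : DifferentiableAt ℝ f x) (α : Fin n) :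
    DifferentiableAt ℝ (fun y => f y α) x :=
  differentiableAt_pi.1 hf α

lemma pd_dot {f g : (Fin m → ℝ) → Fin n → ℝ} {x : Fin m → ℝ}
    (hf : DifferentiableAt ℝ f x) (hg : DifferentiableAt ℝ g x) (i : Fin m) :
    pd i (fun y => dot (f y) (g y)) x = dot (pd i f x) (g x) + dot (f x) (pd i g x) := by
  show pd i (fun y => ∑ α, f y α * g y α) x = _
  rw [pd_sum Finset.univ (fun α _ => ((component_diffAt hf α).fun_mul (component_diffAt hg α))) i]
  unfold dot
  rw [← Finset.sum_add_distrib]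
  refine Finset.sum_congr rfl fun α _ => ?_
  rw [pd_mul (component_diffAt hf α) (component_diffAt hg α), pd_apply hf, pd_apply hg]

lemma dot_comm {v w : Fin n → ℝ} : dot v w = dot w v := by
  unfold dot; exact Finset.sum_congr rfl fun α _ => mul_comm _ _

lemma dot_sum_right {ι : Type*} (s : Finset ι) (v : Fin n → ℝ) (w : ι → Fin n → ℝ) :
    dot v (∑ k ∈ s, w k) = ∑ k ∈ s, dot v (w k) := by
  unfold dot
  rw [Finset.sum_comm]
  exact Finset.sum_congr rfl fun α _ => by simp [Finset.mul_sum]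

lemma dot_sum_left {ι : Type*} (s : Finset ι) (v : Fin n → ℝ) (w : ι → Fin n → ℝ) :
    dot (∑ k ∈ s, w k) v = ∑ k ∈ s, dot (w k) v := by
  rw [dot_comm, dot_sum_right]; simp [dot_comm]

lemma dot_contDiff {f g : (Fin m → ℝ) → Fin n → ℝ} (hf : ContDiff ℝ (⊤ : ℕ∞) f)
    (hg : ContDiff ℝ (⊤ : ℕ∞) g) : ContDiff ℝ (⊤ : ℕ∞) (fun y => dot (f y) (g y)) := by
  show ContDiff ℝ (⊤ : ℕ∞) (fun y => ∑ α, f y α * g y α)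
  exact ContDiff.sum fun α _ => (contDiff_pi.1 hf α).mul (contDiff_pi.1 hg α)

lemma lap_contDiff {f : (Fin m → ℝ) → Fin n → ℝ} (hf : ContDiff ℝ (⊤ : ℕ∞) f) :
    ContDiff ℝ (⊤ : ℕ∞) (lap f) :=
  ContDiff.sum fun i _ => pd_contDiff (pd_contDiff hf i) i

end helpers

/-- Conservation law for the biharmonic stress-energy tensor (flat domain and target):
`div S₂ = -⟨Δτ, dφ⟩`, and `S₂` is divergence-free whenever `Δ²φ = 0`. -/
theorem div_S2 {m n : ℕ} (φ : (Fin m → ℝ) → Fin n → ℝ) (hφ : ContDiff ℝ (⊤ : ℕ∞) φ) :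
    (∀ i x, ∑ j, pd j (fun y => S2 φ i j y) x
      = -dot (lap (lap φ) x) (pd i φ x)) ∧
    ((∀ x, lap (lap φ) x = 0) →
      ∀ i x, ∑ j, pd j (fun y => S2 φ i j y) x = 0) := by
  have hτ : ContDiff ℝ (⊤ : ℕ∞) (lap φ) := lap_contDiff hφ
  have cA : ContDiff ℝ (⊤ : ℕ∞) (fun y => (1/2 : ℝ) * dot (lap φ y) (lap φ y)
      + ∑ k, dot (pd k φ y) (pd k (lap φ) y)) :=
    (contDiff_const.mul (dot_contDiff hτ hτ)).add
      (ContDiff.sum fun k _ => dot_contDiff (pd_contDiff hφ k) (pd_contDiff hτ k))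
  have cB : ∀ i j : Fin m, ContDiff ℝ (⊤ : ℕ∞) (fun y => dot (pd i φ y) (pd j (lap φ) y)) :=
    fun i j => dot_contDiff (pd_contDiff hφ i) (pd_contDiff hτ j)
  have dA : ∀ x, DifferentiableAt ℝ (fun y => (1/2 : ℝ) * dot (lap φ y) (lap φ y)
      + ∑ k, dot (pd k φ y) (pd k (lap φ) y)) x :=
    fun x => (cA.differentiable (by simp)).differentiableAt
  have key : ∀ i x, ∑ j, pd j (fun y => S2 φ i j y) x
      = -dot (lap (lap φ) x) (pd i φ x) := by
    intro i x
    have dφa : ∀ (k : Fin m), DifferentiableAt ℝ (pd k φ) x :=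
      fun k => ((pd_contDiff hφ k).differentiable (by simp)).differentiableAt
    have dτa : DifferentiableAt ℝ (lap φ) x := (hτ.differentiable (by simp)).differentiableAt
    have dτk : ∀ (k : Fin m), DifferentiableAt ℝ (pd k (lap φ)) x :=
      fun k => ((pd_contDiff hτ k).differentiable (by simp)).differentiableAt
    have hstep : ∀ j, pd j (fun y => S2 φ i j y) x =
        (if i = j then (1:ℝ) else 0) *
          ((1/2) * (dot (pd j (lap φ) x) (lap φ x) + dot (lap φ x) (pd j (lap φ) x))
            + ∑ k, (dot (pd j (pd k φ) x) (pd k (lap φ) x)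
              + dot (pd k φ x) (pd j (pd k (lap φ)) x)))
        - (dot (pd j (pd i φ) x) (pd j (lap φ) x) + dot (pd i φ x) (pd j (pd j (lap φ)) x))
        - (dot (pd j (pd j φ) x) (pd i (lap φ) x) + dot (pd j φ x) (pd j (pd i (lap φ)) x)) := by
      intro j
      show pd j (fun y =>
        (if i = j then (1:ℝ) else 0) * ((1/2) * dot (lap φ y) (lap φ y)
          + ∑ k, dot (pd k φ y) (pd k (lap φ) y))
        - dot (pd i φ y) (pd j (lap φ) y) - dot (pd j φ y) (pd i (lap φ) y)) x = _
      rw [pd_sub ((((contDiff_const.mul cA).sub (cB i j)).differentiable (by simp)).differentiableAt)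
            (((cB j i).differentiable (by simp)).differentiableAt) j,
          pd_sub (((contDiff_const.mul cA).differentiable (by simp)).differentiableAt)
            (((cB i j).differentiable (by simp)).differentiableAt) j,
          pd_const_mul (dA x) _ j,
          pd_add (((contDiff_const.mul (dot_contDiff hτ hτ)).differentiable (by simp)).differentiableAt)
            (((ContDiff.sum fun k _ =>
                dot_contDiff (pd_contDiff hφ k) (pd_contDiff hτ k)).differentiable
              (by simp)).differentiableAt) j,
          pd_const_mul (((dot_contDiff hτ hτ).differentiable (by simp)).differentiableAt) _ j,
          pd_dot dτa dτa j,
          pd_sum Finset.univ (fun k _ =>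
            ((dot_contDiff (pd_contDiff hφ k) (pd_contDiff hτ k)).differentiable
              (by simp)).differentiableAt) j,
          pd_dot (dφa i) (dτk j) j, pd_dot (dφa j) (dτk i) j]
      rw [Finset.sum_congr rfl fun k _ => pd_dot (dφa k) (dτk k) j]
    calc ∑ j, pd j (fun y => S2 φ i j y) x
        = ∑ j, ((if i = j then (1:ℝ) else 0) *
            ((1/2) * (dot (pd j (lap φ) x) (lap φ x) + dot (lap φ x) (pd j (lap φ) x))
              + ∑ k, (dot (pd j (pd k φ) x) (pd k (lap φ) x)
                + dot (pd k φ x) (pd j (pd k (lap φ)) x)))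
          - (dot (pd j (pd i φ) x) (pd j (lap φ) x) + dot (pd i φ x) (pd j (pd j (lap φ)) x))
          - (dot (pd j (pd j φ) x) (pd i (lap φ) x) + dot (pd j φ x) (pd j (pd i (lap φ)) x))) :=
        Finset.sum_congr rfl fun j _ => hstep j
      _ = ((1/2) * (dot (pd i (lap φ) x) (lap φ x) + dot (lap φ x) (pd i (lap φ) x))
            + ∑ k, (dot (pd i (pd k φ) x) (pd k (lap φ) x)
              + dot (pd k φ x) (pd i (pd k (lap φ)) x)))
          - ∑ j, (dot (pd j (pd i φ) x) (pd j (lap φ) x) + dot (pd i φ x) (pd j (pd j (lap φ)) x))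
          - ∑ j, (dot (pd j (pd j φ) x) (pd i (lap φ) x) + dot (pd j φ x) (pd j (pd i (lap φ)) x)) := by
        rw [Finset.sum_sub_distrib, Finset.sum_sub_distrib]
        congr 2
        simp [ite_mul, Finset.sum_ite_eq]
      _ = -dot (lap (lap φ) x) (pd i φ x) := by
        have hQ : ∑ j, (dot (pd j (pd i φ) x) (pd j (lap φ) x)
              + dot (pd i φ x) (pd j (pd j (lap φ)) x))
            = (∑ j, dot (pd j (pd i φ) x) (pd j (lap φ) x))
              + dot (pd i φ x) (lap (lap φ) x) := by
          rw [Finset.sum_add_distrib]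
          congr 1
          rw [show lap (lap φ) x = ∑ j, pd j (pd j (lap φ)) x from rfl, dot_sum_right]
        have hR : ∑ j, (dot (pd j (pd j φ) x) (pd i (lap φ) x)
              + dot (pd j φ x) (pd j (pd i (lap φ)) x))
            = dot (lap φ x) (pd i (lap φ) x)
              + ∑ j, dot (pd j φ x) (pd i (pd j (lap φ)) x) := by
          rw [Finset.sum_add_distrib]
          congr 1
          · rw [show lap φ x = ∑ j, pd j (pd j φ) x from rfl, dot_sum_left]
          · exact Finset.sum_congr rfl fun j _ => by rw [pd_comm hτ]
        have hP2 : ∑ k, (dot (pd i (pd k φ) x) (pd k (lap φ) x)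
              + dot (pd k φ x) (pd i (pd k (lap φ)) x))
            = (∑ k, dot (pd k (pd i φ) x) (pd k (lap φ) x))
              + ∑ k, dot (pd k φ x) (pd i (pd k (lap φ)) x) := by
          rw [Finset.sum_add_distrib]
          congr 1
          exact Finset.sum_congr rfl fun k _ => by rw [pd_comm hφ]
        rw [hQ, hR, hP2, dot_comm (v := pd i (lap φ) x) (w := lap φ x),
            dot_comm (v := lap (lap φ) x) (w := pd i φ x)]
        ring
  exact ⟨key, fun h i x => by rw [key i x, h x]; simp [dot]⟩
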